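/- arXiv:2203.00785 — 5 statements merged into one kernel-verified Lean document; each statement's English description precedes it below -/
import Mathlib

section
/- Let (A_r)_{r>0} be a family of measurable subsets of M with μ(A_r) > 0 for all sufficiently small r > 0 and μ(A_r) → 0 as r → 0⁺. Then for every compact set K ⊆ [0,∞), limsup_{r→0⁺} ∫ 𝒩_{A_r}(K) dμ ≤ Leb(K), where Leb denotes Lebesgue measure on [0,∞). -/
/-!
By invariance of `μ`, the expected count `∫ 𝒩_A(K) dμ` is `μ A` times the number of `i` with
`i μ(A) ∈ K`, i.e. the Lebesgue measure of the disjoint union of the intervals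
`[i μ(A), (i + 1) μ(A))` over these `i`. That union lies in the `μ(A)`-thickening of `K`, and the
measures of the closed thickenings of a compact set tend to its measure as the radius tends to `0`.
-/

open MeasureTheory Filter Set Topology
open scoped ENNReal

section

variable {M : Type*} [MeasurableSpace M]

/-- The dynamical point process `𝒩_A(K)` evaluated at `x`. -/
noncomputable def dynamicalCount (μ : Measure M) (f : M → M) (A : Set M) (K : Set ℝ) (x : M) :
    ℝ≥0∞ :=
  ∑' i : ℕ, K.indicator (fun _ => A.indicator (1 : M → ℝ≥0∞) (f^[i] x)) ((i : ℝ) * (μ A).toReal)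

theorem lintegral_dynamicalCount {μ : Measure M} {f : M → M} (hf : MeasurePreserving f μ μ)
    {A : Set M} (hA : MeasurableSet A) (K : Set ℝ) :
    ∫⁻ x, dynamicalCount μ f A K x ∂μ =
      ∑' i : ℕ, K.indicator (fun _ => μ A) ((i : ℝ) * (μ A).toReal) := by
  have hvisit : ∀ i : ℕ, ∫⁻ x, A.indicator (1 : M → ℝ≥0∞) (f^[i] x) ∂μ = μ A := fun i => by
    rw [(hf.iterate i).lintegral_comp (measurable_one.indicator hA), lintegral_indicator_one hA]
  have hmeas : ∀ i : ℕ, Measurable fun x =>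
      K.indicator (fun _ => A.indicator (1 : M → ℝ≥0∞) (f^[i] x)) ((i : ℝ) * (μ A).toReal) :=
      fun i => by
    by_cases h : (i : ℝ) * (μ A).toReal ∈ K
    · simp only [indicator_of_mem h]
      exact (measurable_one.indicator hA).comp (hf.iterate i).measurable
    · simp only [indicator_of_notMem h]
      exact measurable_const
  simp only [dynamicalCount]
  rw [lintegral_tsum fun i => (hmeas i).aemeasurable]
  refine tsum_congr fun i => ?_
  by_cases h : (i : ℝ) * (μ A).toReal ∈ K
  · simp only [indicator_of_mem h, hvisit]
  · simp only [indicator_of_notMem h, lintegral_zero]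

/-- The intervals `[i a, (i + 1) a)` with `i a ∈ K` are disjoint and lie in the
`a`-thickening of `K`. -/
theorem tsum_indicator_natCast_mul_le_volume_cthickening (K : Set ℝ) {a : ℝ} (ha : 0 ≤ a) :
    ∑' i : ℕ, K.indicator (fun _ => ENNReal.ofReal a) ((i : ℝ) * a) ≤
      volume (Metric.cthickening a K) := by
  set S : Set ℕ := {i | (i : ℝ) * a ∈ K}
  set I : ℕ → Set ℝ := fun i => Ico ((i : ℝ) * a) ((i + 1 : ℕ) * a)
  have hmono : Monotone fun i : ℕ => (i : ℝ) * a := fun _ _ hij =>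
    mul_le_mul_of_nonneg_right (Nat.cast_le.mpr hij) ha
  have hsum : ∀ i : ℕ, K.indicator (fun _ => ENNReal.ofReal a) ((i : ℝ) * a) =
      S.indicator (fun i => volume (I i)) i := fun i => by
    by_cases h : (i : ℝ) * a ∈ K
    · rw [indicator_of_mem h, indicator_of_mem (show i ∈ S from h), Real.volume_Ico]
      push_cast; ring_nf
    · rw [indicator_of_notMem h, indicator_of_notMem (show i ∉ S from h)]
  have hsub : (⋃ i ∈ S, I i) ⊆ Metric.cthickening a K := by
    simp only [iUnion_subset_iff]
    intro i hi x hx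
    refine Metric.mem_cthickening_of_dist_le x _ a K hi ?_
    simp only [I, mem_Ico] at hx
    push_cast at hx
    rw [Real.dist_eq, abs_of_nonneg (by linarith)]
    linarith
  calc ∑' i : ℕ, K.indicator (fun _ => ENNReal.ofReal a) ((i : ℝ) * a)
      = ∑' i : S, volume (I i) := by
        rw [tsum_congr hsum, tsum_subtype S fun i => volume (I i)]
    _ = volume (⋃ i ∈ S, I i) :=
        (measure_biUnion S.to_countable (hmono.pairwise_disjoint_on_Ico_succ.set_pairwise S)
          fun _ _ => measurableSet_Ico).symm
    _ ≤ volume (Metric.cthickening a K) := measure_mono hsub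

theorem lintegral_dynamicalCount_le {μ : Measure M} [IsFiniteMeasure μ] {f : M → M}
    (hf : MeasurePreserving f μ μ) {A : Set M} (hA : MeasurableSet A) (K : Set ℝ) :
    ∫⁻ x, dynamicalCount μ f A K x ∂μ ≤ volume (Metric.cthickening (μ A).toReal K) := by
  rw [lintegral_dynamicalCount hf hA, ← ENNReal.ofReal_toReal (measure_ne_top μ A)]
  simpa only [ENNReal.toReal_ofReal ENNReal.toReal_nonneg] using
    tsum_indicator_natCast_mul_le_volume_cthickening K ENNReal.toReal_nonneg

end

theorem stmt0_general {M : Type*} [MeasurableSpace M] (μ : Measure M) [IsProbabilityMeasure μ]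
    (f : M → M) (hf : MeasurePreserving f μ μ)
    (A : ℝ → Set M) (hAmeas : ∀ r, MeasurableSet (A r))
    (hA0 : Tendsto (fun r => μ (A r)) (𝓝[>] (0 : ℝ)) (𝓝 0))
    (K : Set ℝ) (hK : IsCompact K) :
    limsup (fun r => ∫⁻ x, ∑' i : ℕ,
        K.indicator (fun _ => (A r).indicator (1 : M → ℝ≥0∞) (f^[i] x))
          ((i : ℝ) * (μ (A r)).toReal) ∂μ)
      (𝓝[>] (0 : ℝ)) ≤ volume K := by
  have hradius : Tendsto (fun r => (μ (A r)).toReal) (𝓝[>] (0 : ℝ)) (𝓝 0) := by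
    have h := (ENNReal.tendsto_toReal ENNReal.zero_ne_top).comp hA0
    rwa [ENNReal.toReal_zero] at h
  calc _ ≤ limsup (fun r => volume (Metric.cthickening (μ (A r)).toReal K)) (𝓝[>] (0 : ℝ)) :=
        limsup_le_limsup (.of_forall fun r => lintegral_dynamicalCount_le hf (hAmeas r) K)
    _ = volume K := ((tendsto_measure_cthickening_of_isCompact hK).comp hradius).limsup_eq

/-- Let `(A r)_{r>0}` be a family of measurable subsets of `M` with
`μ (A r) > 0` for all sufficiently small `r > 0` and `μ (A r) → 0` as `r → 0⁺`.
Then for every compact `K ⊆ [0,∞)`,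
`limsup_{r→0⁺} ∫ 𝒩_{A r}(K) dμ ≤ Leb K`, where
`𝒩_A(K) x = ∑_{i ∈ ℕ, i·μ(A) ∈ K} 1_A (f^[i] x)`. -/
theorem stmt0 {M : Type*} [MeasurableSpace M] (μ : Measure M) [IsProbabilityMeasure μ]
    (f : M → M) (hf : MeasurePreserving f μ μ)
    (A : ℝ → Set M) (hAmeas : ∀ r, MeasurableSet (A r))
    (hApos : ∀ᶠ r in 𝓝[>] (0 : ℝ), 0 < μ (A r))
    (hA0 : Tendsto (fun r => μ (A r)) (𝓝[>] (0 : ℝ)) (𝓝 0))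
    (K : Set ℝ) (hK : IsCompact K) (hKsub : K ⊆ Ici (0 : ℝ)) :
    limsup (fun r => ∫⁻ x, ∑' i : ℕ,
        K.indicator (fun _ => (A r).indicator (1 : M → ℝ≥0∞) (f^[i] x))
          ((i : ℝ) * (μ (A r)).toReal) ∂μ)
      (𝓝[>] (0 : ℝ)) ≤ volume K :=
  stmt0_general μ f hf A hAmeas hA0 K hK
end

section
/- Let (Q_r)_{r>0} and (S_r)_{r>0} be families of measurable subsets of M with S_r ⊆ Q_r, μ(Q_r) > 0 for all sufficiently small r > 0, μ(Q_r) → 0 and μ(Q_r ∖ S_r)/μ(Q_r) → 0 as r → 0⁺. Then for every finite collection of pairwise disjoint bounded intervals J_1, …, J_n ⊆ [0,∞), lim_{r→0⁺} [ μ({x ∈ M : f^j(x) ∉ S_r for every j ∈ ℕ with j·μ(S_r) ∈ ⋃_{i≤n} J_i}) − μ({x ∈ M : f^j(x) ∉ Q_r for every j ∈ ℕ with j·μ(Q_r) ∈ ⋃_{i≤n} J_i}) ] = 0. (Note μ(S_r) > 0 for small r, since μ(S_r) ≥ μ(Q_r)(1 − o(1)).) -/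
open MeasureTheory Filter Set Topology
open scoped symmDiff

/-!
Write `a = μ Q`, `s = μ S` and `U = ⋃ i, J i ⊆ [0, C]`. The two avoidance events differ in the
target (`S` versus `Q`) and in the set of times (`{j | j s ∈ U}` versus `{j | j a ∈ U}`).
By the union bound and invariance of `μ`, changing the target costs at most
`#{j | j a ∈ U} · μ (Q \ S) ≤ n (C / a + 1) μ (Q \ S)`, and changing the times costs `μ S` per time
in the symmetric difference. Since each `J i` is an interval, a time `j` in that symmetric
difference has an endpoint of some `J i` between `j s` and `j a`, so there are at most
`2 n (C (1/s - 1/a) + 1)` of them. Altogether the difference is `O(n (C μ(Q \ S)/μ Q + μ Q))`.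
-/

section Avoidance

variable {M : Type*} {f : M → M}

def avoidanceSet (f : M → M) (I : Set ℕ) (A : Set M) : Set M := {x | ∀ j ∈ I, f^[j] x ∉ A}

lemma avoidanceSet_anti {A B : Set M} (hAB : A ⊆ B) (I : Set ℕ) :
    avoidanceSet f I B ⊆ avoidanceSet f I A :=
  fun _ hx j hj hjA => hx j hj (hAB hjA)

variable [MeasurableSpace M] {μ : Measure M}

lemma measureReal_biUnion_preimage_iterate_le (hf : MeasurePreserving f μ μ) {K : Set ℕ}
    (hK : K.Finite) {A : Set M} (hA : MeasurableSet A) :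
    μ.real (⋃ j ∈ K, f^[j] ⁻¹' A) ≤ K.ncard * μ.real A := by
  lift K to Finset ℕ using hK
  calc μ.real (⋃ j ∈ K, f^[j] ⁻¹' A) ≤ ∑ j ∈ K, μ.real (f^[j] ⁻¹' A) :=
        measureReal_biUnion_finset_le K _
    _ = K.card * μ.real A := by
        simp only [(hf.iterate _).measureReal_preimage hA.nullMeasurableSet, Finset.sum_const,
          nsmul_eq_mul]
    _ = _ := by rw [ncard_coe_finset]

variable [IsFiniteMeasure μ]

lemma measureReal_avoidanceSet_le_add_ncard_sdiff_mul (hf : MeasurePreserving f μ μ) {A : Set M}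
    (hA : MeasurableSet A) {I I' : Set ℕ} (hI : (I' \ I).Finite) :
    μ.real (avoidanceSet f I A) ≤ μ.real (avoidanceSet f I' A) + (I' \ I).ncard * μ.real A := by
  have hsub : avoidanceSet f I A ⊆ avoidanceSet f I' A ∪ ⋃ j ∈ I' \ I, f^[j] ⁻¹' A := by
    intro x hx
    by_contra! h
    simp only [mem_union, mem_iUnion, mem_preimage, not_or, not_exists] at h
    obtain ⟨j, hjI', hjA⟩ : ∃ j ∈ I', f^[j] x ∈ A := by simpa [avoidanceSet] using h.1
    exact h.2 j ⟨hjI', fun hjI => hx j hjI hjA⟩ hjA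
  calc μ.real (avoidanceSet f I A)
      ≤ μ.real (avoidanceSet f I' A) + μ.real (⋃ j ∈ I' \ I, f^[j] ⁻¹' A) :=
        (measureReal_mono hsub).trans (measureReal_union_le _ _)
    _ ≤ _ := by grw [measureReal_biUnion_preimage_iterate_le hf hI hA]

lemma measureReal_avoidanceSet_le_add_ncard_mul_sdiff (hf : MeasurePreserving f μ μ) {A B : Set M}
    (hA : MeasurableSet A) (hB : MeasurableSet B) {I : Set ℕ} (hI : I.Finite) :
    μ.real (avoidanceSet f I A) ≤ μ.real (avoidanceSet f I B) + I.ncard * μ.real (B \ A) := by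
  have hsub : avoidanceSet f I A ⊆ avoidanceSet f I B ∪ ⋃ j ∈ I, f^[j] ⁻¹' (B \ A) := by
    intro x hx
    by_contra! h
    simp only [mem_union, mem_iUnion, mem_preimage, not_or, not_exists] at h
    obtain ⟨j, hjI, hjB⟩ : ∃ j ∈ I, f^[j] x ∈ B := by simpa [avoidanceSet] using h.1
    exact h.2 j hjI ⟨hjB, hx j hjI⟩
  calc μ.real (avoidanceSet f I A)
      ≤ μ.real (avoidanceSet f I B) + μ.real (⋃ j ∈ I, f^[j] ⁻¹' (B \ A)) :=
        (measureReal_mono hsub).trans (measureReal_union_le _ _)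
    _ ≤ _ := by grw [measureReal_biUnion_preimage_iterate_le hf hI (hB.diff hA)]

lemma abs_measureReal_avoidanceSet_sub_le (hf : MeasurePreserving f μ μ) {A B : Set M}
    (hA : MeasurableSet A) (hB : MeasurableSet B) (hAB : A ⊆ B) {I I' : Set ℕ}
    (hI : I.Finite) (hI' : I'.Finite) :
    |μ.real (avoidanceSet f I A) - μ.real (avoidanceSet f I' B)|
      ≤ (I ∆ I').ncard * μ.real A + I'.ncard * μ.real (B \ A) := by
  have hcard : ((I ∆ I').ncard : ℝ) = (I \ I').ncard + (I' \ I).ncard := by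
    exact_mod_cast ncard_union_eq disjoint_sdiff_sdiff hI.sdiff hI'.sdiff
  have h₁ := measureReal_avoidanceSet_le_add_ncard_sdiff_mul hf hA (hI'.sdiff (t := I))
  have h₂ := measureReal_avoidanceSet_le_add_ncard_sdiff_mul hf hA (hI.sdiff (t := I'))
  have h₃ := measureReal_avoidanceSet_le_add_ncard_mul_sdiff hf hA hB hI'
  have h₄ : μ.real (avoidanceSet f I' B) ≤ μ.real (avoidanceSet f I' A) :=
    measureReal_mono (avoidanceSet_anti hAB I')
  have : 0 ≤ ((I \ I').ncard : ℝ) * μ.real A := by positivity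
  have : 0 ≤ ((I' \ I).ncard : ℝ) * μ.real A := by positivity
  rw [abs_sub_le_iff, hcard]
  constructor <;> linarith

end Avoidance

section Counting

lemma ncard_le_card_mul_of_subset_iUnion {α ι : Type*} [Fintype ι] {K : Set α}
    {L : ι → Set α} (hKL : K ⊆ ⋃ i, L i) (hL : ∀ i, (L i).Finite) {B : ℝ}
    (hB : ∀ i, ((L i).ncard : ℝ) ≤ B) : (K.ncard : ℝ) ≤ Fintype.card ι * B := by
  calc (K.ncard : ℝ) ≤ ∑ i, ((L i).ncard : ℝ) := by
        exact_mod_cast (ncard_le_ncard hKL (finite_iUnion hL)).trans (ncard_iUnion_le_of_fintype L)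
    _ ≤ ∑ _i : ι, B := Finset.sum_le_sum fun i _ => hB i
    _ = Fintype.card ι * B := by simp

lemma ncard_le_of_forall_natCast_mem_Icc {K : Set ℕ} {u v : ℝ} (huv : u ≤ v)
    (hK : ∀ j ∈ K, (j : ℝ) ∈ Icc u v) : (K.ncard : ℝ) ≤ v - u + 1 := by
  rcases K.eq_empty_or_nonempty with rfl | ⟨j, hj⟩
  · simp only [ncard_empty, Nat.cast_zero]
    linarith
  have hv : 0 ≤ v := (Nat.cast_nonneg j).trans (hK j hj).2
  have hsub : K ⊆ Finset.Icc ⌈u⌉₊ ⌊v⌋₊ := fun i hi => by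
    simpa [Nat.ceil_le, Nat.le_floor_iff hv] using hK i hi
  have hle : ⌈u⌉₊ ≤ ⌊v⌋₊ + 1 := by
    have := Finset.mem_Icc.1 (hsub hj)
    omega
  calc (K.ncard : ℝ) ≤ (Finset.Icc ⌈u⌉₊ ⌊v⌋₊).card := by
        exact_mod_cast (ncard_le_ncard hsub (Finset.finite_toSet _)).trans_eq (ncard_coe_finset _)
    _ = ⌊v⌋₊ + 1 - ⌈u⌉₊ := by rw [Nat.card_Icc, Nat.cast_sub hle]; push_cast; ring
    _ ≤ v - u + 1 := by linarith [Nat.floor_le hv, Nat.le_ceil u]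

lemma ncard_le_of_forall_mul_le_le_mul {K : Set ℕ} {s a p C : ℝ} (hs : 0 < s) (hsa : s ≤ a)
    (hp : p ∈ Icc 0 C) (hK : ∀ j ∈ K, (j : ℝ) * s ≤ p ∧ p ≤ j * a) :
    (K.ncard : ℝ) ≤ C * (s⁻¹ - a⁻¹) + 1 := by
  have ha : 0 < a := hs.trans_le hsa
  have hsa' : a⁻¹ ≤ s⁻¹ := inv_anti₀ hs hsa
  calc (K.ncard : ℝ) ≤ p * s⁻¹ - p * a⁻¹ + 1 := by
        refine ncard_le_of_forall_natCast_mem_Icc (by nlinarith [hp.1]) fun j hj => ?_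
        obtain ⟨h₁, h₂⟩ := hK j hj
        exact ⟨by rwa [← div_eq_mul_inv, div_le_iff₀ ha], by rwa [← div_eq_mul_inv, le_div_iff₀ hs]⟩
    _ ≤ C * (s⁻¹ - a⁻¹) + 1 := by nlinarith [hp.2]

def rescaledIndices (t : ℝ) (T : Set ℝ) : Set ℕ := {j | (j : ℝ) * t ∈ T}

lemma rescaledIndices_iUnion {ι : Type*} (t : ℝ) (T : ι → Set ℝ) :
    rescaledIndices t (⋃ i, T i) = ⋃ i, rescaledIndices t (T i) :=
  preimage_iUnion

variable {s a t C : ℝ} {T : Set ℝ}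

lemma rescaledIndices_finite (ht : 0 < t) (hT : BddAbove T) : (rescaledIndices t T).Finite := by
  obtain ⟨C, hC⟩ := hT
  refine finite_iff_bddAbove.2 ⟨⌊C / t⌋₊, fun j hj => Nat.le_floor ?_⟩
  rw [le_div_iff₀ ht]
  exact hC hj

lemma ncard_rescaledIndices_le (ht : 0 < t) (hC : 0 ≤ C) (hTC : T ⊆ Icc 0 C) :
    ((rescaledIndices t T).ncard : ℝ) ≤ C / t + 1 := by
  simpa using ncard_le_of_forall_natCast_mem_Icc (K := rescaledIndices t T) (u := 0)
    (div_nonneg hC ht.le) fun j hj => ⟨Nat.cast_nonneg j, (le_div_iff₀ ht).2 (hTC hj).2⟩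

/-- Since `T` is an interval, an index `j` counted here has `j * s ≤ sSup T ≤ j * a` or
`j * s ≤ sInf T ≤ j * a`. -/
lemma ncard_rescaledIndices_symmDiff_le (hs : 0 < s) (hsa : s ≤ a) (hT : T.OrdConnected)
    (hC : 0 ≤ C) (hTC : T ⊆ Icc 0 C) :
    ((rescaledIndices s T ∆ rescaledIndices a T).ncard : ℝ) ≤ 2 * (C * (s⁻¹ - a⁻¹) + 1) := by
  have hsup : ((rescaledIndices s T \ rescaledIndices a T).ncard : ℝ) ≤ C * (s⁻¹ - a⁻¹) + 1 := by
    have hbdd : BddAbove T := ⟨C, fun t ht => (hTC ht).2⟩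
    refine ncard_le_of_forall_mul_le_le_mul hs hsa (p := sSup T)
      ⟨Real.sSup_nonneg fun t ht => (hTC ht).1, Real.sSup_le (fun t ht => (hTC ht).2) hC⟩ ?_
    rintro j ⟨hjs, hja⟩
    refine ⟨le_csSup hbdd hjs, csSup_le ⟨_, hjs⟩ fun t ht => ?_⟩
    by_contra! hlt
    exact hja (hT.out hjs ht ⟨by gcongr, hlt.le⟩)
  have hinf : ((rescaledIndices a T \ rescaledIndices s T).ncard : ℝ) ≤ C * (s⁻¹ - a⁻¹) + 1 := by
    have hbdd : BddBelow T := ⟨0, fun t ht => (hTC ht).1⟩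
    have hinfC : sInf T ≤ C := by
      rcases T.eq_empty_or_nonempty with rfl | ⟨t, ht⟩
      · simpa using hC
      · exact (csInf_le hbdd ht).trans (hTC ht).2
    refine ncard_le_of_forall_mul_le_le_mul hs hsa (p := sInf T)
      ⟨Real.sInf_nonneg fun t ht => (hTC ht).1, hinfC⟩ ?_
    rintro j ⟨hja, hjs⟩
    refine ⟨le_csInf ⟨_, hja⟩ fun t ht => ?_, csInf_le hbdd hja⟩
    by_contra! hlt
    exact hjs (hT.out ht hja ⟨hlt.le, by gcongr⟩)
  calc ((rescaledIndices s T ∆ rescaledIndices a T).ncard : ℝ)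
      ≤ (rescaledIndices s T \ rescaledIndices a T).ncard
        + (rescaledIndices a T \ rescaledIndices s T).ncard := by exact_mod_cast ncard_union_le _ _
    _ ≤ 2 * (C * (s⁻¹ - a⁻¹) + 1) := by linarith

end Counting

lemma abs_measureReal_avoidanceSet_rescaled_sub_le {M ι : Type*} [MeasurableSpace M]
    {μ : Measure M} [IsFiniteMeasure μ] [Fintype ι] {f : M → M} (hf : MeasurePreserving f μ μ)
    {Q S : Set M} (hQ : MeasurableSet Q) (hS : MeasurableSet S) (hSQ : S ⊆ Q)
    (hS₀ : 0 < μ.real S) {J : ι → Set ℝ} (hJ : ∀ i, (J i).OrdConnected) {C : ℝ} (hC : 0 ≤ C)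
    (hJC : ∀ i, J i ⊆ Icc 0 C) :
    |μ.real (avoidanceSet f (rescaledIndices (μ.real S) (⋃ i, J i)) S)
        - μ.real (avoidanceSet f (rescaledIndices (μ.real Q) (⋃ i, J i)) Q)|
      ≤ Fintype.card ι * (3 * C * (μ.real (Q \ S) / μ.real Q) + 2 * μ.real Q) := by
  set s := μ.real S
  set a := μ.real Q
  have hsa : s ≤ a := measureReal_mono hSQ
  have ha : 0 < a := hS₀.trans_le hsa
  have hd : μ.real (Q \ S) = a - s := measureReal_sdiff hSQ hS
  have hbdd : BddAbove (⋃ i, J i) := ⟨C, iUnion_subset fun i x hx => (hJC i hx).2⟩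
  have hfin : ∀ t > 0, ∀ i, (rescaledIndices t (J i)).Finite := fun t ht i =>
    rescaledIndices_finite ht ⟨C, fun x hx => (hJC i hx).2⟩
  have hsymm : ((rescaledIndices s (⋃ i, J i) ∆ rescaledIndices a (⋃ i, J i)).ncard : ℝ)
      ≤ Fintype.card ι * (2 * (C * (s⁻¹ - a⁻¹) + 1)) := by
    rw [rescaledIndices_iUnion, rescaledIndices_iUnion]
    exact ncard_le_card_mul_of_subset_iUnion iUnion_symmDiff_iUnion_subset
      (fun i => (hfin s hS₀ i).symmDiff (hfin a ha i))
      fun i => ncard_rescaledIndices_symmDiff_le hS₀ hsa (hJ i) hC (hJC i)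
  have hcard : ((rescaledIndices a (⋃ i, J i)).ncard : ℝ) ≤ Fintype.card ι * (C / a + 1) :=
    ncard_le_card_mul_of_subset_iUnion (rescaledIndices_iUnion a J).le (hfin a ha)
      fun i => ncard_rescaledIndices_le ha hC (hJC i)
  calc _ ≤ ((rescaledIndices s (⋃ i, J i) ∆ rescaledIndices a (⋃ i, J i)).ncard : ℝ) * s
          + (rescaledIndices a (⋃ i, J i)).ncard * μ.real (Q \ S) :=
        abs_measureReal_avoidanceSet_sub_le hf hS hQ hSQ (rescaledIndices_finite hS₀ hbdd)
          (rescaledIndices_finite ha hbdd)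
    _ ≤ Fintype.card ι * (2 * (C * (s⁻¹ - a⁻¹) + 1)) * s
          + Fintype.card ι * (C / a + 1) * (a - s) := by
        rw [hd]
        gcongr
    _ = Fintype.card ι * (3 * C * ((a - s) / a) + s + a) := by
        field_simp
        ring
    _ ≤ _ := by
        rw [hd]
        exact mul_le_mul_of_nonneg_left (by linarith) (Nat.cast_nonneg _)

theorem stmt2_general {M : Type*} [MeasurableSpace M] (μ : Measure M) [IsProbabilityMeasure μ]
    (f : M → M) (hf : MeasurePreserving f μ μ)
    (Q S : ℝ → Set M) (hQmeas : ∀ r, MeasurableSet (Q r)) (hSmeas : ∀ r, MeasurableSet (S r))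
    (hsub : ∀ r, S r ⊆ Q r)
    (hQpos : ∀ᶠ r in 𝓝[>] (0 : ℝ), 0 < μ (Q r))
    (hQ0 : Tendsto (fun r => μ (Q r)) (𝓝[>] (0 : ℝ)) (𝓝 0))
    (hdiff : Tendsto (fun r => μ (Q r \ S r) / μ (Q r)) (𝓝[>] (0 : ℝ)) (𝓝 0))
    (n : ℕ) (J : Fin n → Set ℝ)
    (hJint : ∀ i, (J i).OrdConnected) (hJbdd : ∀ i, Bornology.IsBounded (J i))
    (hJsub : ∀ i, J i ⊆ Ici (0 : ℝ)) :
    Tendsto (fun r =>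
      (μ {x | ∀ j : ℕ, (j : ℝ) * (μ (S r)).toReal ∈ ⋃ i, J i → f^[j] x ∉ S r}).toReal
      - (μ {x | ∀ j : ℕ, (j : ℝ) * (μ (Q r)).toReal ∈ ⋃ i, J i → f^[j] x ∉ Q r}).toReal)
      (𝓝[>] (0 : ℝ)) (𝓝 0) := by
  obtain ⟨C, hC, hJC⟩ : ∃ C, 0 ≤ C ∧ ∀ i, J i ⊆ Icc 0 C := by
    obtain ⟨C, hC⟩ := (Bornology.isBounded_iUnion.2 hJbdd).bddAbove
    exact ⟨max C 0, le_max_right _ _, fun i x hx =>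
      ⟨hJsub i hx, (hC (mem_iUnion_of_mem i hx)).trans (le_max_left _ _)⟩⟩
  have hQ0' : Tendsto (fun r => μ.real (Q r)) (𝓝[>] 0) (𝓝 0) := by
    simpa [measureReal_def, Function.comp_def] using
      (ENNReal.tendsto_toReal ENNReal.zero_ne_top).comp hQ0
  have hdiff' : Tendsto (fun r => μ.real (Q r \ S r) / μ.real (Q r)) (𝓝[>] 0) (𝓝 0) := by
    simpa [measureReal_def, Function.comp_def, ENNReal.toReal_div] using
      (ENNReal.tendsto_toReal ENNReal.zero_ne_top).comp hdiff
  have hS₀ : ∀ᶠ r in 𝓝[>] (0 : ℝ), 0 < μ.real (S r) := by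
    filter_upwards [hQpos, hdiff.eventually_lt_const zero_lt_one] with r hQr hr
    refine ENNReal.toReal_pos (fun hSr => hr.ne ?_) (measure_ne_top _ _)
    rw [measure_sdiff_null hSr, ENNReal.div_self hQr.ne' (measure_ne_top _ _)]
  have hbound : Tendsto (fun r => (Fintype.card (Fin n) : ℝ)
      * (3 * C * (μ.real (Q r \ S r) / μ.real (Q r)) + 2 * μ.real (Q r))) (𝓝[>] 0) (𝓝 0) := by
    simpa using tendsto_const_nhds.mul ((tendsto_const_nhds.mul hdiff').add
      (tendsto_const_nhds.mul hQ0'))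
  refine squeeze_zero_norm' ?_ hbound
  filter_upwards [hS₀] with r hr
  rw [Real.norm_eq_abs]
  exact abs_measureReal_avoidanceSet_rescaled_sub_le hf (hQmeas r) (hSmeas r) (hsub r) hr
    hJint hC hJC

/-- Let `(Q r)` and `(S r)` be families of measurable subsets of `M`
with `S r ⊆ Q r`, `μ (Q r) > 0` for all sufficiently small `r > 0`, `μ (Q r) → 0` and
`μ (Q r ∖ S r)/μ (Q r) → 0` as `r → 0⁺`. Then for every finite collection of pairwise
disjoint bounded intervals `J 1, …, J n ⊆ [0,∞)`, the difference of the avoidance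
probabilities for the sections and the quasi-sections tends to `0` as `r → 0⁺`. -/
theorem stmt2 {M : Type*} [MeasurableSpace M] (μ : Measure M) [IsProbabilityMeasure μ]
    (f : M → M) (hf : MeasurePreserving f μ μ)
    (Q S : ℝ → Set M) (hQmeas : ∀ r, MeasurableSet (Q r)) (hSmeas : ∀ r, MeasurableSet (S r))
    (hsub : ∀ r, S r ⊆ Q r)
    (hQpos : ∀ᶠ r in 𝓝[>] (0 : ℝ), 0 < μ (Q r))
    (hQ0 : Tendsto (fun r => μ (Q r)) (𝓝[>] (0 : ℝ)) (𝓝 0))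
    (hdiff : Tendsto (fun r => μ (Q r \ S r) / μ (Q r)) (𝓝[>] (0 : ℝ)) (𝓝 0))
    (n : ℕ) (J : Fin n → Set ℝ)
    (hJint : ∀ i, (J i).OrdConnected) (hJbdd : ∀ i, Bornology.IsBounded (J i))
    (hJsub : ∀ i, J i ⊆ Ici (0 : ℝ))
    (hJdisj : ∀ i j, i ≠ j → Disjoint (J i) (J j)) :
    Tendsto (fun r =>
      (μ {x | ∀ j : ℕ, (j : ℝ) * (μ (S r)).toReal ∈ ⋃ i, J i → f^[j] x ∉ S r}).toReal
      - (μ {x | ∀ j : ℕ, (j : ℝ) * (μ (Q r)).toReal ∈ ⋃ i, J i → f^[j] x ∉ Q r}).toReal)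
      (𝓝[>] (0 : ℝ)) (𝓝 0) :=
  stmt2_general μ f hf Q S hQmeas hSmeas hsub hQpos hQ0 hdiff n J hJint hJbdd hJsub
end

section
/- There is a constant C depending only on N with the following property. For every integer n ≥ 1 and every integer p with 0 < p < n, sup_h |∫ h(𝐗_0, 𝐗_1, …, 𝐗_n) dμ − ∫ h dν^{⊗(n+1)}| ≤ C (R_1 + R_2 + R_3), where R_1 := Σ_{0≤l≤n−p} sup_{a ∈ {0,1}^N, a ≠ 0} sup_h |∫ 1_{𝐗_0 = a} h(𝐗_p, …, 𝐗_{n−l}) dμ − μ(𝐗_0 = a) ∫ h(𝐗_p, …, 𝐗_{n−l}) dμ|, R_2 := n · sup_{a ∈ {0,1}^N, a ≠ 0} μ({𝐗_0 = a} ∩ {𝐗_j ≥ 1 for some 1 ≤ j ≤ p−1}), and R_3 := p n μ(H)^2 + p μ(H). -/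
open MeasureTheory Filter Set Topology
open scoped ENNReal NNReal

/-- The block vector `𝐗_i = (1_H ∘ T^{Ni}, …, 1_H ∘ T^{N(i+1)-1})`, with values in
`{0,1}^N`, encoded as `Fin N → Bool` (`true` means the orbit point lies in `H`). -/
noncomputable def blockVec {Ω : Type*} (T : Ω → Ω) (H : Set Ω) (N : ℕ) (i : ℕ) (ω : Ω) :
    Fin N → Bool :=
  fun j => @decide (T^[N * i + j.1] ω ∈ H) (Classical.propDecidable _)

/-!
Peel off the first block. With `A_a = {𝐗_0 = a}` and `g_a = g(a, ·)`, stationarity turns the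
discrepancy of `(𝐗_0, …, 𝐗_m)` into `∑_a Cov(1_{A_a}, g_a(𝐗_1, …, 𝐗_m))` plus a `ν`-average of
discrepancies of length `m`, so the total error is a sum of one-step covariance terms. For a fixed
function these covariances sum to zero over `a`, so one may subtract the covariances against
`g_0` and keep only the letters `a ≠ 0`, whose total mass is at most `N μ(H)`. For `m < p` each
covariance is bounded by `μ(A_a)`, so these steps cost at most `2 p N μ(H)`. For `m ≥ p`, off
the short-return event `{𝐗_j ≠ 0 for some 1 ≤ j < p}` the blocks `𝐗_1, …, 𝐗_{p-1}` vanish, so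
`g_a(𝐗_1, …, 𝐗_m)` is a function of `𝐗_p, …, 𝐗_m` and its covariance with `1_{A_a}` is one of
the decorrelation terms of `R_1`; the replacement costs
`μ(A_a ∩ short return) + μ(A_a) μ(short return)`, which produces `R_2` and, as the short-return
event has measure at most `p N μ(H)`, the term `p n μ(H)^2`.
-/

section CovIndicator

variable {Ω : Type*} [MeasurableSpace Ω] {μ : Measure Ω}

noncomputable def covIndicator (μ : Measure Ω) (A : Set Ω) (f : Ω → ℝ) : ℝ :=
  ∫ ω in A, f ω ∂μ - μ.real A * ∫ ω, f ω ∂μ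

lemma abs_covIndicator_le [IsProbabilityMeasure μ] (A : Set Ω) {f : Ω → ℝ}
    (hf : ∀ ω, f ω ∈ Icc (0 : ℝ) 1) : |covIndicator μ A f| ≤ μ.real A := by
  have hnorm : ∀ ω, ‖f ω‖ ≤ 1 := fun ω => by
    rw [Real.norm_of_nonneg (hf ω).1]; exact (hf ω).2
  have hA : ∫ ω in A, f ω ∂μ ≤ μ.real A := by
    simpa using (le_abs_self _).trans
      (norm_setIntegral_le_of_norm_le_const (measure_lt_top μ A) fun ω _ => hnorm ω)
  have hΩ : ∫ ω, f ω ∂μ ≤ 1 := by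
    simpa using (le_abs_self _).trans (norm_integral_le_of_norm_le_const (ae_of_all μ hnorm))
  have hA₀ : 0 ≤ ∫ ω in A, f ω ∂μ := integral_nonneg fun ω => (hf ω).1
  have hΩ₀ : 0 ≤ ∫ ω, f ω ∂μ := integral_nonneg fun ω => (hf ω).1
  have hμA : 0 ≤ μ.real A := measureReal_nonneg
  rw [covIndicator, abs_le]
  constructor <;> nlinarith

lemma abs_setIntegral_sub_le_of_eqOn_compl [IsFiniteMeasure μ] (s : Set Ω) {B : Set Ω}
    (hB : MeasurableSet B) {f g : Ω → ℝ} (hf : Integrable f μ) (hg : Integrable g μ)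
    (hfg : ∀ ω, |f ω - g ω| ≤ 1) (hfgB : EqOn f g Bᶜ) :
    |∫ ω in s, f ω ∂μ - ∫ ω in s, g ω ∂μ| ≤ μ.real (s ∩ B) := by
  have hind : (fun ω => f ω - g ω) = B.indicator fun ω => f ω - g ω := by
    ext ω
    by_cases hω : ω ∈ B
    · rw [indicator_of_mem hω]
    · rw [indicator_of_notMem hω, hfgB hω, sub_self]
  rw [← integral_sub hf.integrableOn hg.integrableOn, hind, setIntegral_indicator hB,
    ← Real.norm_eq_abs]
  simpa using norm_setIntegral_le_of_norm_le_const (measure_lt_top μ (s ∩ B))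
    fun ω _ => (Real.norm_eq_abs _).trans_le (hfg ω)

lemma abs_covIndicator_sub_le [IsFiniteMeasure μ] (A : Set Ω) {B : Set Ω}
    (hB : MeasurableSet B) {f g : Ω → ℝ} (hf : Integrable f μ) (hg : Integrable g μ)
    (hfg : ∀ ω, |f ω - g ω| ≤ 1) (hfgB : EqOn f g Bᶜ) :
    |covIndicator μ A f - covIndicator μ A g| ≤ μ.real (A ∩ B) + μ.real A * μ.real B := by
  have hA := abs_setIntegral_sub_le_of_eqOn_compl A hB hf hg hfg hfgB
  have hΩ := abs_setIntegral_sub_le_of_eqOn_compl univ hB hf hg hfg hfgB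
  rw [Measure.restrict_univ, univ_inter] at hΩ
  have hsplit : covIndicator μ A f - covIndicator μ A g
      = (∫ ω in A, f ω ∂μ - ∫ ω in A, g ω ∂μ)
        - μ.real A * (∫ ω, f ω ∂μ - ∫ ω, g ω ∂μ) := by
    unfold covIndicator; ring
  rw [hsplit]
  calc _ ≤ |∫ ω in A, f ω ∂μ - ∫ ω in A, g ω ∂μ|
          + μ.real A * |∫ ω, f ω ∂μ - ∫ ω, g ω ∂μ| := by
        refine (abs_sub _ _).trans (add_le_add le_rfl ?_)
        rw [abs_mul, abs_of_nonneg measureReal_nonneg]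
    _ ≤ _ := add_le_add hA (mul_le_mul_of_nonneg_left hΩ measureReal_nonneg)

lemma integrable_comp_of_finite [IsFiniteMeasure μ] {W : Type*} [Finite W] [MeasurableSpace W]
    [MeasurableSingletonClass W] {G : Ω → W} (hG : Measurable G) (g : W → ℝ) :
    Integrable (fun ω => g (G ω)) μ :=
  Integrable.of_finite.comp_measurable hG

variable {V : Type*} [Fintype V] [MeasurableSpace V] [MeasurableSingletonClass V] {G : Ω → V}

lemma sum_setIntegral_fiber (hG : Measurable G) {f : Ω → ℝ} (hf : Integrable f μ) :
    ∑ a, ∫ ω in G ⁻¹' {a}, f ω ∂μ = ∫ ω, f ω ∂μ := by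
  rw [← integral_iUnion_fintype (fun a => hG (measurableSet_singleton a))
    (pairwise_disjoint_fiber G) fun _ => hf.integrableOn, ← preimage_iUnion,
    iUnion_of_singleton, preimage_univ, Measure.restrict_univ]

lemma sum_measureReal_fiber_erase [IsFiniteMeasure μ] [DecidableEq V] (hG : Measurable G)
    (z : V) : ∑ a ∈ Finset.univ.erase z, μ.real (G ⁻¹' {a}) = μ.real (G ⁻¹' {z}ᶜ) := by
  rw [sum_measureReal_preimage_singleton _ fun a _ => hG (measurableSet_singleton a),
    Finset.coe_erase, Finset.coe_univ, ← compl_eq_univ_sdiff]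

variable [IsProbabilityMeasure μ]

lemma sum_covIndicator_fiber_eq_zero (hG : Measurable G) {f : Ω → ℝ} (hf : Integrable f μ) :
    ∑ a, covIndicator μ (G ⁻¹' {a}) f = 0 := by
  have hmass : ∑ a, μ.real (G ⁻¹' {a}) = 1 := by
    rw [sum_measureReal_preimage_singleton _ fun a _ => hG (measurableSet_singleton a)]
    simp
  simp only [covIndicator, Finset.sum_sub_distrib, ← Finset.sum_mul, sum_setIntegral_fiber hG hf,
    hmass, one_mul, sub_self]

lemma abs_sum_covIndicator_le [DecidableEq V] (hG : Measurable G) (z : V) {F : V → Ω → ℝ}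
    (hF : ∀ b, Integrable (F b) μ) (ε : V → ℝ)
    (hε : ∀ a, a ≠ z → ∀ b, |covIndicator μ (G ⁻¹' {a}) (F b)| ≤ ε a) :
    |∑ a, covIndicator μ (G ⁻¹' {a}) (F a)| ≤ 2 * ∑ a ∈ Finset.univ.erase z, ε a := by
  have hrecenter : ∑ a, covIndicator μ (G ⁻¹' {a}) (F a)
      = ∑ a ∈ Finset.univ.erase z,
          (covIndicator μ (G ⁻¹' {a}) (F a) - covIndicator μ (G ⁻¹' {a}) (F z)) := by
    rw [Finset.sum_erase (f := fun a =>
        covIndicator μ (G ⁻¹' {a}) (F a) - covIndicator μ (G ⁻¹' {a}) (F z)) _ (sub_self _),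
      Finset.sum_sub_distrib, sum_covIndicator_fiber_eq_zero hG (hF z), sub_zero]
  rw [hrecenter, Finset.mul_sum]
  refine (Finset.abs_sum_le_sum_abs _ _).trans (Finset.sum_le_sum fun a ha => ?_)
  have ha : a ≠ z := Finset.ne_of_mem_erase ha
  linarith [abs_sub (covIndicator μ (G ⁻¹' {a}) (F a)) (covIndicator μ (G ⁻¹' {a}) (F z)),
    hε a ha a, hε a ha z]

end CovIndicator

section ShortReturn

variable {Ω V : Type*} {X : ℕ → Ω → V}

def shortReturn (X : ℕ → Ω → V) (z : V) (p : ℕ) : Set Ω :=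
  {ω | ∃ j, 1 ≤ j ∧ j < p ∧ X j ω ≠ z}

def padTail (z : V) (p m : ℕ) (u : Fin (m + 1 - p) → V) : Fin m → V :=
  fun t => if h : t.1 + 1 < p then z else u ⟨t + 1 - p, by have := t.2; omega⟩

lemma tail_eq_padTail {z : V} {p : ℕ} {ω : Ω} (hω : ω ∉ shortReturn X z p) (m : ℕ) :
    (fun t : Fin m => X (t + 1) ω) = padTail z p m (fun t => X (p + t) ω) := by
  ext t
  unfold padTail
  split_ifs with h
  · by_contra hne
    exact hω ⟨t + 1, by omega, h, hne⟩
  · dsimp only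
    congr 1
    omega

variable [MeasurableSpace Ω] [MeasurableSpace V] {μ : Measure Ω} {S : Ω → Ω}

lemma measure_preimage_eq_of_stationary (hX : ∀ i, Measurable (X i))
    (hS : MeasurePreserving S μ μ) (hXS : ∀ i ω, X (i + 1) ω = X i (S ω)) (j : ℕ) {s : Set V}
    (hs : MeasurableSet s) : μ (X j ⁻¹' s) = μ (X 0 ⁻¹' s) := by
  induction j with
  | zero => rfl
  | succ j ih =>
    have : X (j + 1) ⁻¹' s = S ⁻¹' (X j ⁻¹' s) := by ext ω; simp [hXS]
    rw [this, hS.measure_preimage (hX j hs).nullMeasurableSet, ih]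

variable [MeasurableSingletonClass V]

lemma measurableSet_shortReturn (hX : ∀ i, Measurable (X i)) (z : V) (p : ℕ) :
    MeasurableSet (shortReturn X z p) := by
  simp only [shortReturn, ofPred_exists]
  exact .iUnion fun j => (MeasurableSet.const _).inter <| (MeasurableSet.const _).inter <|
    (hX j (measurableSet_singleton z)).compl

lemma measureReal_shortReturn_le [IsFiniteMeasure μ] (hX : ∀ i, Measurable (X i))
    (hS : MeasurePreserving S μ μ) (hXS : ∀ i ω, X (i + 1) ω = X i (S ω)) (z : V) (p : ℕ) :
    μ.real (shortReturn X z p) ≤ p * μ.real (X 0 ⁻¹' {z}ᶜ) := by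
  have hsub : shortReturn X z p ⊆ ⋃ j ∈ Finset.range p, X j ⁻¹' {z}ᶜ := by
    rintro ω ⟨j, -, hjp, hj⟩
    exact mem_biUnion (Finset.mem_range.2 hjp) hj
  calc μ.real (shortReturn X z p) ≤ ∑ j ∈ Finset.range p, μ.real (X j ⁻¹' {z}ᶜ) :=
        (measureReal_mono hsub (measure_ne_top _ _)).trans (measureReal_biUnion_finset_le _ _)
    _ = p * μ.real (X 0 ⁻¹' {z}ᶜ) := by
        simp only [measureReal_def, measure_preimage_eq_of_stationary hX hS hXS _
          (measurableSet_singleton z).compl, Finset.sum_const, Finset.card_range, nsmul_eq_mul]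

end ShortReturn

section Discrepancy

variable {Ω V : Type*} [MeasurableSpace Ω] {μ : Measure Ω} [MeasurableSpace V]

noncomputable def discrepancy (μ : Measure Ω) (X : ℕ → Ω → V) (m : ℕ)
    (g : (Fin m → V) → ℝ) : ℝ :=
  ∫ ω, g (fun t => X t ω) ∂μ - ∫ v, g v ∂(Measure.pi fun _ : Fin m => μ.map (X 0))

lemma discrepancy_zero [IsProbabilityMeasure μ] {X : ℕ → Ω → V} (g : (Fin 0 → V) → ℝ) :
    discrepancy μ X 0 g = 0 := by
  have : ∀ v : Fin 0 → V, g v = g finZeroElim := fun v => congrArg g (Subsingleton.elim _ _)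
  simp [discrepancy, this, measureReal_def]

variable [Fintype V] [MeasurableSingletonClass V]

lemma integral_pi_fin_succ (ν : Measure V) [IsFiniteMeasure ν] {m : ℕ}
    (g : (Fin (m + 1) → V) → ℝ) :
    ∫ v, g v ∂(Measure.pi fun _ : Fin (m + 1) => ν)
      = ∑ a, ν.real {a} * ∫ v, g (Fin.cons a v) ∂(Measure.pi fun _ : Fin m => ν) := by
  rw [← ((measurePreserving_piFinSuccAbove (fun _ : Fin (m + 1) => ν) 0).symm).integral_comp',
    integral_prod _ .of_finite, integral_fintype .of_finite]
  simp_rw [MeasurableEquiv.piFinSuccAbove_symm_apply, Fin.insertNthEquiv, Equiv.coe_fn_mk,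
    Fin.insertNth_zero', smul_eq_mul]

variable {X : ℕ → Ω → V} {S : Ω → Ω}

lemma integral_shift_tuple (hX : ∀ i, Measurable (X i)) (hS : MeasurePreserving S μ μ)
    (hXS : ∀ i ω, X (i + 1) ω = X i (S ω)) {m : ℕ} (g : (Fin m → V) → ℝ) :
    ∫ ω, g (fun t => X (t + 1) ω) ∂μ = ∫ ω, g (fun t => X t ω) ∂μ := by
  simp_rw [hXS]
  conv_rhs => rw [← hS.map_eq]
  exact (integral_map hS.aemeasurable ((measurable_of_countable g).comp
    (measurable_pi_lambda _ fun t => hX t)).aestronglyMeasurable).symm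

variable [IsProbabilityMeasure μ]

lemma discrepancy_succ (hX : ∀ i, Measurable (X i)) (hS : MeasurePreserving S μ μ)
    (hXS : ∀ i ω, X (i + 1) ω = X i (S ω)) {m : ℕ} (g : (Fin (m + 1) → V) → ℝ) :
    discrepancy μ X (m + 1) g
      = ∑ a, covIndicator μ (X 0 ⁻¹' {a}) (fun ω => g (Fin.cons a fun t => X (t + 1) ω))
        + ∑ a, (μ.map (X 0)).real {a} * discrepancy μ X m (fun v => g (Fin.cons a v)) := by
  have hfiber : ∀ a, ∫ ω in X 0 ⁻¹' {a}, g (fun t => X t ω) ∂μ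
      = ∫ ω in X 0 ⁻¹' {a}, g (Fin.cons a fun t => X (t + 1) ω) ∂μ := by
    refine fun a => setIntegral_congr_fun (hX 0 (measurableSet_singleton a)) fun ω hω => ?_
    congr 1
    ext t
    cases t using Fin.cases with
    | zero => exact hω
    | succ t => rfl
  rw [discrepancy, ← sum_setIntegral_fiber (hX 0) (integrable_comp_of_finite (by fun_prop) g),
    integral_pi_fin_succ, ← Finset.sum_sub_distrib, ← Finset.sum_add_distrib]
  refine Finset.sum_congr rfl fun a _ => ?_
  rw [hfiber, discrepancy, covIndicator, integral_shift_tuple hX hS hXS fun v => g (Fin.cons a v),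
    map_measureReal_apply (hX 0) (measurableSet_singleton a)]
  ring

lemma abs_discrepancy_le_sum (hX : ∀ i, Measurable (X i)) (hS : MeasurePreserving S μ μ)
    (hXS : ∀ i ω, X (i + 1) ω = X i (S ω)) (δ : ℕ → ℝ)
    (hδ : ∀ m (g : (Fin (m + 1) → V) → ℝ), (∀ v, g v ∈ Icc (0 : ℝ) 1) →
      |∑ a, covIndicator μ (X 0 ⁻¹' {a}) (fun ω => g (Fin.cons a fun t => X (t + 1) ω))| ≤ δ m)
    (m : ℕ) (g : (Fin m → V) → ℝ) (hg : ∀ v, g v ∈ Icc (0 : ℝ) 1) :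
    |discrepancy μ X m g| ≤ ∑ j ∈ Finset.range m, δ j := by
  induction m with
  | zero => simp [discrepancy_zero]
  | succ m ih =>
    have : IsProbabilityMeasure (μ.map (X 0)) :=
      Measure.isProbabilityMeasure_map (hX 0).aemeasurable
    have htail : |∑ a, (μ.map (X 0)).real {a} * discrepancy μ X m (fun v => g (Fin.cons a v))|
        ≤ ∑ j ∈ Finset.range m, δ j := by
      calc _ ≤ ∑ a, (μ.map (X 0)).real {a} * ∑ j ∈ Finset.range m, δ j := by
            refine (Finset.abs_sum_le_sum_abs _ _).trans (Finset.sum_le_sum fun a _ => ?_)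
            rw [abs_mul, abs_of_nonneg measureReal_nonneg]
            exact mul_le_mul_of_nonneg_left (ih _ fun v => hg _) measureReal_nonneg
        _ = _ := by rw [← Finset.sum_mul, sum_measureReal_singleton]; simp
    rw [discrepancy_succ hX hS hXS, Finset.sum_range_succ, add_comm _ (δ m)]
    exact (abs_add_le _ _).trans (add_le_add (hδ m g hg) htail)

end Discrepancy

section Decorrelation

lemma le_iSup_ne {ι : Type*} [Finite ι] (f : ι → ℝ) {z a : ι} (ha : a ≠ z) :
    f a ≤ ⨆ b, ⨆ (_ : b ≠ z), f b :=
  le_ciSup_of_le (Set.finite_range _).bddAbove a (ciSup_pos (f := fun _ => f a) ha).ge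

variable {Ω V : Type*} [MeasurableSpace Ω] {μ : Measure Ω} {X : ℕ → Ω → V}

noncomputable def decorrelation (μ : Measure Ω) (X : ℕ → Ω → V) (z : V) (p k : ℕ) : ℝ :=
  ⨆ (a) (_ : a ≠ z), ⨆ h : (Fin k → V) → Icc (0 : ℝ) 1,
    |covIndicator μ (X 0 ⁻¹' {a}) (fun ω => h (fun t => X (p + t) ω))|

lemma decorrelation_nonneg (z : V) (p k : ℕ) : 0 ≤ decorrelation μ X z p k :=
  Real.iSup_nonneg fun _ => Real.iSup_nonneg fun _ => Real.iSup_nonneg fun _ => abs_nonneg _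

lemma sum_Ico_decorrelation (z : V) {p n : ℕ} (hpn : p ≤ n) :
    ∑ m ∈ Finset.Ico p (n + 1), decorrelation μ X z p (m + 1 - p)
      = ∑ l ∈ Finset.range (n - p + 1), decorrelation μ X z p (n - l - p + 1) := by
  rw [Finset.sum_Ico_eq_sum_range, ← Finset.sum_range_reflect,
    show n + 1 - p = n - p + 1 by omega]
  refine Finset.sum_congr rfl fun l hl => ?_
  have := Finset.mem_range.1 hl
  congr 1
  omega

lemma abs_covIndicator_le_decorrelation [IsProbabilityMeasure μ] [Finite V] {z a : V}
    (ha : a ≠ z) (p : ℕ) {k : ℕ} (h : (Fin k → V) → Icc (0 : ℝ) 1) :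
    |covIndicator μ (X 0 ⁻¹' {a}) (fun ω => h (fun t => X (p + t) ω))|
      ≤ decorrelation μ X z p k :=
  calc _ ≤ ⨆ h : (Fin k → V) → Icc (0 : ℝ) 1,
          |covIndicator μ (X 0 ⁻¹' {a}) (fun ω => h (fun t => X (p + t) ω))| :=
        le_ciSup ⟨1, forall_mem_range.2 fun h =>
          (abs_covIndicator_le _ fun _ => (h _).2).trans measureReal_le_one⟩ h
    _ ≤ _ := le_iSup_ne (fun b => ⨆ h : (Fin k → V) → Icc (0 : ℝ) 1,
          |covIndicator μ (X 0 ⁻¹' {b}) (fun ω => h (fun t => X (p + t) ω))|) ha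

end Decorrelation

section StepBounds

variable {Ω V : Type*} [MeasurableSpace Ω] {μ : Measure Ω} [IsProbabilityMeasure μ]
  [Fintype V] [MeasurableSpace V] [MeasurableSingletonClass V] {X : ℕ → Ω → V}

lemma abs_sum_covIndicator_cons_le_two_mul [DecidableEq V] (hX : ∀ i, Measurable (X i)) (z : V)
    {m : ℕ} (g : (Fin (m + 1) → V) → ℝ) (hg : ∀ v, g v ∈ Icc (0 : ℝ) 1) :
    |∑ a, covIndicator μ (X 0 ⁻¹' {a}) (fun ω => g (Fin.cons a fun t => X (t + 1) ω))|
      ≤ 2 * μ.real (X 0 ⁻¹' {z}ᶜ) := by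
  rw [← sum_measureReal_fiber_erase (hX 0) z]
  exact abs_sum_covIndicator_le (hX 0) z
    (fun b => integrable_comp_of_finite (by fun_prop) fun v => g (Fin.cons b v)) _
    fun a _ b => abs_covIndicator_le _ fun ω => hg _

lemma abs_sum_covIndicator_cons_le_decorrelation [DecidableEq V] (hX : ∀ i, Measurable (X i))
    (z : V) (p : ℕ) {m : ℕ} (g : (Fin (m + 1) → V) → ℝ) (hg : ∀ v, g v ∈ Icc (0 : ℝ) 1) :
    |∑ a, covIndicator μ (X 0 ⁻¹' {a}) (fun ω => g (Fin.cons a fun t => X (t + 1) ω))|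
      ≤ 2 * ∑ a ∈ Finset.univ.erase z, (decorrelation μ X z p (m + 1 - p)
          + μ.real (X 0 ⁻¹' {a} ∩ shortReturn X z p)
          + μ.real (X 0 ⁻¹' {a}) * μ.real (shortReturn X z p)) := by
  refine abs_sum_covIndicator_le (hX 0) z
    (fun b => integrable_comp_of_finite (by fun_prop) fun v => g (Fin.cons b v)) _
    fun a ha b => ?_
  set F : Ω → ℝ := fun ω => g (Fin.cons b fun t => X (t + 1) ω)
  set F' : Ω → ℝ := fun ω => g (Fin.cons b (padTail z p m fun t => X (p + t) ω))
  have hFF' : |covIndicator μ (X 0 ⁻¹' {a}) F - covIndicator μ (X 0 ⁻¹' {a}) F'|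
      ≤ μ.real (X 0 ⁻¹' {a} ∩ shortReturn X z p)
        + μ.real (X 0 ⁻¹' {a}) * μ.real (shortReturn X z p) := by
    refine abs_covIndicator_sub_le _ (measurableSet_shortReturn hX z p)
      (integrable_comp_of_finite (by fun_prop) fun v => g (Fin.cons b v))
      (integrable_comp_of_finite (by fun_prop) fun u => g (Fin.cons b (padTail z p m u)))
      (fun ω => ?_) fun ω hω => by simp only [F, F', tail_eq_padTail hω]
    have h₁ := hg (Fin.cons b fun t => X (t + 1) ω)
    have h₂ := hg (Fin.cons b (padTail z p m fun t => X (p + t) ω))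
    rw [abs_le]
    constructor <;> linarith [h₁.1, h₁.2, h₂.1, h₂.2]
  have hF' := abs_covIndicator_le_decorrelation (μ := μ) (X := X) ha p
    fun u => ⟨g (Fin.cons b (padTail z p m u)), hg _⟩
  linarith [abs_sub_abs_le_abs_sub (covIndicator μ (X 0 ⁻¹' {a}) F)
    (covIndicator μ (X 0 ⁻¹' {a}) F')]

variable {S : Ω → Ω}

theorem abs_discrepancy_le_of_shortReturn_le (hX : ∀ i, Measurable (X i))
    (hS : MeasurePreserving S μ μ) (hXS : ∀ i ω, X (i + 1) ω = X i (S ω)) (z : V) {p n : ℕ}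
    (hpn : p ≤ n) {β : ℝ} (hβ₀ : 0 ≤ β)
    (hβ : ∀ a, a ≠ z → μ.real (X 0 ⁻¹' {a} ∩ shortReturn X z p) ≤ β)
    (g : (Fin n → V) → ℝ) (hg : ∀ v, g v ∈ Icc (0 : ℝ) 1) :
    |discrepancy μ X n g| ≤ 2 * p * μ.real (X 0 ⁻¹' {z}ᶜ)
      + 2 * ∑ m ∈ Finset.Ico p n, (Fintype.card V * (decorrelation μ X z p (m + 1 - p) + β)
        + p * μ.real (X 0 ⁻¹' {z}ᶜ) ^ 2) := by
  classical
  set q := μ.real (X 0 ⁻¹' {z}ᶜ)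
  set δ : ℕ → ℝ := fun m => if m < p then 2 * q
    else 2 * (Fintype.card V * (decorrelation μ X z p (m + 1 - p) + β) + p * q ^ 2)
  have hstep : ∀ m (g : (Fin (m + 1) → V) → ℝ), (∀ v, g v ∈ Icc (0 : ℝ) 1) →
      |∑ a, covIndicator μ (X 0 ⁻¹' {a}) (fun ω => g (Fin.cons a fun t => X (t + 1) ω))|
        ≤ δ m := by
    intro m g hg
    simp only [δ]
    split_ifs
    · exact abs_sum_covIndicator_cons_le_two_mul hX z g hg
    refine (abs_sum_covIndicator_cons_le_decorrelation hX z p g hg).trans ?_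
    rw [Finset.sum_add_distrib, ← Finset.sum_mul, sum_measureReal_fiber_erase (hX 0)]
    have hgood : ∑ a ∈ Finset.univ.erase z, (decorrelation μ X z p (m + 1 - p)
          + μ.real (X 0 ⁻¹' {a} ∩ shortReturn X z p))
        ≤ Fintype.card V * (decorrelation μ X z p (m + 1 - p) + β) :=
      calc _ ≤ ∑ a ∈ Finset.univ.erase z, (decorrelation μ X z p (m + 1 - p) + β) :=
            Finset.sum_le_sum fun a ha => by gcongr; exact hβ a (Finset.ne_of_mem_erase ha)
        _ ≤ _ := by
            rw [Finset.sum_const, nsmul_eq_mul]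
            gcongr
            · exact add_nonneg (decorrelation_nonneg z p _) hβ₀
            · exact_mod_cast Finset.card_le_univ _
    have hbad : q * μ.real (shortReturn X z p) ≤ p * q ^ 2 :=
      calc _ ≤ q * (p * q) := mul_le_mul_of_nonneg_left
            (measureReal_shortReturn_le hX hS hXS z p) measureReal_nonneg
        _ = _ := by ring
    linarith
  refine (abs_discrepancy_le_sum hX hS hXS δ hstep n g hg).trans_eq ?_
  rw [← Finset.sum_range_add_sum_Ico _ hpn,
    Finset.sum_congr rfl fun m hm => if_pos (Finset.mem_range.1 hm),
    Finset.sum_congr rfl fun m hm => if_neg (Finset.mem_Ico.1 hm).1.not_gt,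
    Finset.sum_const, Finset.card_range, nsmul_eq_mul, Finset.mul_sum]
  ring

theorem abs_discrepancy_le_const_mul (hX : ∀ i, Measurable (X i))
    (hS : MeasurePreserving S μ μ) (hXS : ∀ i ω, X (i + 1) ω = X i (S ω)) {z : V}
    (hz : ∃ a, a ≠ z) {K x : ℝ} (hK : 0 ≤ K) (hx : 0 ≤ x) (hq : μ.real (X 0 ⁻¹' {z}ᶜ) ≤ K * x)
    {n p : ℕ} (hp : 0 < p) (hpn : p ≤ n) (g : (Fin (n + 1) → V) → ℝ)
    (hg : ∀ v, g v ∈ Icc (0 : ℝ) 1) :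
    |discrepancy μ X (n + 1) g| ≤ (2 * Fintype.card V + 2 * K + 2 * K ^ 2) *
      (∑ l ∈ Finset.range (n - p + 1), decorrelation μ X z p (n - l - p + 1)
        + n * ⨆ a, ⨆ (_ : a ≠ z),
          (μ.real (X 0 ⁻¹' {a} ∩ shortReturn X z p) + (p * n * x ^ 2 + p * x))) := by
  set q := μ.real (X 0 ⁻¹' {z}ᶜ)
  set R₃ : ℝ := p * n * x ^ 2 + p * x
  set β := ⨆ a, ⨆ (_ : a ≠ z), (μ.real (X 0 ⁻¹' {a} ∩ shortReturn X z p) + R₃)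
  set D := ∑ l ∈ Finset.range (n - p + 1), decorrelation μ X z p (n - l - p + 1)
  have hβ : ∀ a, a ≠ z → μ.real (X 0 ⁻¹' {a} ∩ shortReturn X z p) + R₃ ≤ β := fun a ha =>
    le_iSup_ne (fun b => μ.real (X 0 ⁻¹' {b} ∩ shortReturn X z p) + R₃) ha
  have hR₃ : 0 ≤ R₃ := by positivity
  have hR₃β : R₃ ≤ β := by
    obtain ⟨a, ha⟩ := hz
    linarith [hβ a ha, measureReal_nonneg (μ := μ) (s := X 0 ⁻¹' {a} ∩ shortReturn X z p)]
  have hD : 0 ≤ D := Finset.sum_nonneg fun l _ => decorrelation_nonneg z p _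
  have key := abs_discrepancy_le_of_shortReturn_le hX hS hXS z (p := p) (n := n + 1) (by omega)
    (hR₃.trans hR₃β) (fun a ha => by linarith [hβ a ha]) g hg
  simp only [mul_add, Finset.sum_add_distrib, ← Finset.mul_sum, sum_Ico_decorrelation z hpn,
    Finset.sum_const, Nat.card_Ico, nsmul_eq_mul] at key
  have hn : ((n + 1 - p : ℕ) : ℝ) ≤ n := by exact_mod_cast (by omega : n + 1 - p ≤ n)
  have hn₁ : (1 : ℝ) ≤ n := by exact_mod_cast (by omega : 1 ≤ n)
  have hshort : 2 * p * q + 2 * ((n + 1 - p : ℕ) * (p * q ^ 2)) ≤ (2 * K + 2 * K ^ 2) * R₃ := by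
    have hq2 : q ^ 2 ≤ (K * x) ^ 2 := pow_le_pow_left₀ measureReal_nonneg hq 2
    have h1 : (p : ℝ) * q ≤ p * (K * x) := by gcongr
    have h2 : ((n + 1 - p : ℕ) : ℝ) * (p * q ^ 2) ≤ n * (p * (K * x) ^ 2) := by gcongr
    have h3 : 0 ≤ K * (p * n * x ^ 2) + K ^ 2 * (p * x) := by positivity
    linarith
  have hβn : R₃ ≤ n * β := hR₃β.trans (le_mul_of_one_le_left (hR₃.trans hR₃β) hn₁)
  have hlong : (Fintype.card V : ℝ) * (((n + 1 - p : ℕ) : ℝ) * β)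
      ≤ Fintype.card V * (n * β) := by
    gcongr
    exact hR₃.trans hR₃β
  linarith [mul_le_mul_of_nonneg_left hβn (by positivity : (0 : ℝ) ≤ 2 * K + 2 * K ^ 2),
    mul_nonneg (by positivity : (0 : ℝ) ≤ 2 * K + 2 * K ^ 2) hD]

end StepBounds

section BlockVec

variable {Ω : Type*} {T : Ω → Ω} {H : Set Ω} {N : ℕ}

lemma blockVec_succ (i : ℕ) (ω : Ω) :
    blockVec T H N (i + 1) ω = blockVec T H N i (T^[N] ω) := by
  ext k
  simp only [blockVec]
  rw [← Function.iterate_add_apply, show N * i + k + N = N * (i + 1) + k by ring]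

lemma measurable_blockVec [MeasurableSpace Ω] (hT : Measurable T) (hH : MeasurableSet H)
    (i : ℕ) : Measurable (blockVec T H N i) :=
  measurable_pi_lambda _ fun k => measurable_to_bool <| by
    convert (hT.iterate (N * i + k)) hH
    ext ω
    simp [blockVec]

lemma measureReal_blockVec_ne_zero_le [MeasurableSpace Ω] {μ : Measure Ω} [IsFiniteMeasure μ]
    (hT : MeasurePreserving T μ μ) (hH : MeasurableSet H) :
    μ.real (blockVec T H N 0 ⁻¹' {fun _ => false}ᶜ) ≤ N * μ.real H := by
  have hsub : blockVec T H N 0 ⁻¹' {fun _ => false}ᶜ ⊆ ⋃ k : Fin N, T^[k] ⁻¹' H := by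
    intro ω hω
    obtain ⟨k, hk⟩ : ∃ k, blockVec T H N 0 ω k = true := by
      simpa [funext_iff] using hω
    exact mem_iUnion.2 ⟨k, by simpa [blockVec] using hk⟩
  calc _ ≤ ∑ k : Fin N, μ.real (T^[k] ⁻¹' H) :=
        (measureReal_mono hsub (measure_ne_top _ _)).trans (measureReal_iUnion_fintype_le _)
    _ = N * μ.real H := by
        simp [(hT.iterate _).measureReal_preimage hH.nullMeasurableSet]

lemma shortReturn_blockVec (p : ℕ) :
    shortReturn (blockVec T H N) (fun _ => false) p
      = {ω | ∃ j, 1 ≤ j ∧ j ≤ p - 1 ∧ ∃ k, blockVec T H N j ω k = true} := by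
  ext ω
  simp only [shortReturn, mem_ofPred_eq, ne_eq, funext_iff, not_forall, Bool.not_eq_false]
  exact exists_congr fun j => ⟨fun ⟨h₁, h₂, h₃⟩ => ⟨h₁, by omega, h₃⟩,
    fun ⟨h₁, h₂, h₃⟩ => ⟨h₁, by omega, h₃⟩⟩

end BlockVec

/-- There is a constant `C` depending only on `N` such that for every
integer `n ≥ 1` and every integer `0 < p < n`, for every `[0,1]`-valued `h`,
`|∫ h(𝐗_0, …, 𝐗_n) dμ − ∫ h dν^{⊗(n+1)}| ≤ C (R₁ + R₂ + R₃)`, where `ν` is the law of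
`𝐗_0`, `R₁` is the sum of decorrelation errors, `R₂` the short-return term and
`R₃ = p n μ(H)² + p μ(H)`. -/
theorem stmt5 (N : ℕ) (hN : 1 ≤ N) :
    ∃ C : ℝ, 0 < C ∧
    ∀ (Ω : Type*) [MeasurableSpace Ω] (μ : Measure Ω) [IsProbabilityMeasure μ]
      (T : Ω → Ω), MeasurePreserving T μ μ →
    ∀ (H : Set Ω), MeasurableSet H → 0 < μ H →
    ∀ n p : ℕ, 1 ≤ n → 0 < p → p < n →
    ∀ h : (Fin (n + 1) → (Fin N → Bool)) → ℝ, (∀ v, h v ∈ Icc (0 : ℝ) 1) →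
    |(∫ ω, h (fun i => blockVec T H N i.1 ω) ∂μ)
        - ∫ v, h v ∂(Measure.pi fun _ : Fin (n + 1) => Measure.map (blockVec T H N 0) μ)|
      ≤ C * (
        (∑ l ∈ Finset.range (n - p + 1),
          ⨆ (a : Fin N → Bool) (_ : a ≠ fun _ => false),
          ⨆ h' : (Fin (n - l - p + 1) → (Fin N → Bool)) → Icc (0 : ℝ) 1,
          |(∫ ω in {ω | blockVec T H N 0 ω = a},
              (h' (fun t => blockVec T H N (p + t.1) ω) : ℝ) ∂μ)
            - (μ {ω | blockVec T H N 0 ω = a}).toReal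
              * ∫ ω, (h' (fun t => blockVec T H N (p + t.1) ω) : ℝ) ∂μ|)
        + (n : ℝ) *
            ⨆ (a : Fin N → Bool) (_ : a ≠ fun _ => false),
            (μ ({ω | blockVec T H N 0 ω = a}
              ∩ {ω | ∃ j : ℕ, 1 ≤ j ∧ j ≤ p - 1 ∧ ∃ k, blockVec T H N j ω k = true})).toReal
        + ((p : ℝ) * n * (μ H).toReal ^ 2 + (p : ℝ) * (μ H).toReal)) := by
  refine ⟨2 * Fintype.card (Fin N → Bool) + 2 * N + 2 * N ^ 2, by positivity, ?_⟩
  intro Ω _ μ _ T hT H hH _ n p _ hp hpn h hh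
  have hz : ∃ a : Fin N → Bool, a ≠ fun _ => false :=
    ⟨fun _ => true, fun h => by simpa using congrFun h ⟨0, hN⟩⟩
  rw [← shortReturn_blockVec]
  -- the goal is this conclusion with `discrepancy`, `decorrelation` and `covIndicator` unfolded
  exact abs_discrepancy_le_const_mul (measurable_blockVec hT.measurable hH) (hT.iterate N)
    blockVec_succ hz (Nat.cast_nonneg N) measureReal_nonneg
    (measureReal_blockVec_ne_zero_le hT hH) hp hpn.le h hh
end

section
/- (Decorrelation transfer with boundary sets) Let (Ω', μ') be a probability space and U : Ω' → Ω' a measurable measure-preserving map. Let N ≥ 1 and let B_j ⊆ B̄_j and ∂B_j (0 ≤ j ≤ N−1) be measurable subsets of Ω' with B̄_j ∖ B_j ⊆ ∂B_j for each j. Put A := ⋃_j B_j, Ā := ⋃_j B̄_j, ∂A := ⋃_j ∂B_j, and 𝐁 := (1_{B_0}, …, 1_{B_{N−1}}) : Ω' → {0,1}^N. Assume there are constants C > 0, β ∈ (0,1) and integers k ≥ 1 and p > 2k such that for every bounded measurable h : Ω' → ℝ and every integer n' ≥ p, |∫ 1_{Ā} · (h ∘ U^{n'}) dμ' − μ'(Ā)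 ∫ h dμ'| ≤ C β^{n'−2k} μ'(Ā) ‖h‖_∞. Then there is a constant C' depending only on C such that for all integers n ≥ p and 0 ≤ l ≤ n−p, sup over all functions h : ({0,1}^N)^{n−l−p+1} → [0,1] of |∫ 1_A h(𝐁∘U^p, …, 𝐁∘U^{n−l}) dμ' − μ'(A) ∫ h(𝐁∘U^p, …, 𝐁∘U^{n−l}) dμ'| is at most C' ( [1 + n μ'(Ā)] · μ'(∂A) + β^{p−2k} μ'(Ā) ). -/
open MeasureTheory Filter Set Topology
open scoped ENNReal NNReal

/-- The indicator block vector `𝐁 = (1_{B 0}, …, 1_{B (N-1)})`, with values in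
`{0,1}^N` encoded as `Fin N → Bool`. -/
noncomputable def indVec {Ω' : Type*} {N : ℕ} (B : Fin N → Set Ω') (x : Ω') :
    Fin N → Bool :=
  fun j => @decide (x ∈ B j) (Classical.propDecidable _)

/-! Write `g` for `h` evaluated on the coded orbit `(𝐁, 𝐁 ∘ U, …)`, so that the integrand is
`g ∘ U^p` and `∫ g ∘ U^p = ∫ g` by invariance. Since `|g| ≤ 1`, replacing `A` by `Ā` changes
`∫_A g ∘ U^p` and `μ(A) ∫ g` by at most `μ(Ā \ A) ≤ μ(∂A)` each, and on `Ā` the decorrelation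
hypothesis at `n' = p` applies; hence `C' = C + 2`. -/

namespace MeasureTheory

variable {Ω : Type*} [MeasurableSpace Ω] {μ : Measure Ω} {f : Ω → ℝ} {K : ℝ} {s t : Set Ω}

lemma abs_setIntegral_sub_setIntegral_le [IsFiniteMeasure μ] (hf : Integrable f μ)
    (hfK : ∀ x, |f x| ≤ K) (hs : MeasurableSet s) (hst : s ⊆ t) :
    |∫ x in s, f x ∂μ - ∫ x in t, f x ∂μ| ≤ K * μ.real (t \ s) := by
  rw [abs_sub_comm, ← setIntegral_sdiff hs hf.integrableOn hst, ← Real.norm_eq_abs]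
  exact norm_setIntegral_le_of_norm_le_const (measure_lt_top μ _) fun x _ =>
    (Real.norm_eq_abs _).trans_le (hfK x)

lemma abs_setIntegral_sub_mul_integral_le_of_subset [IsProbabilityMeasure μ]
    (hf : Integrable f μ) (hfK : ∀ x, |f x| ≤ K) (hs : MeasurableSet s) (hst : s ⊆ t) :
    |∫ x in s, f x ∂μ - μ.real s * ∫ x, f x ∂μ|
      ≤ |∫ x in t, f x ∂μ - μ.real t * ∫ x, f x ∂μ| + 2 * K * μ.real (t \ s) := by
  have hint : |∫ x, f x ∂μ| ≤ K := by
    simpa using norm_integral_le_of_norm_le_const (μ := μ)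
      (ae_of_all _ fun x => (Real.norm_eq_abs _).trans_le (hfK x))
  have hset := abs_setIntegral_sub_setIntegral_le hf hfK hs hst
  have hmeas : |μ.real t - μ.real s| * |∫ x, f x ∂μ| ≤ μ.real (t \ s) * K := by
    rw [measureReal_sdiff hst hs, abs_of_nonneg (sub_nonneg.2 (measureReal_mono hst))]
    exact mul_le_mul_of_nonneg_left hint (sub_nonneg.2 (measureReal_mono hst))
  calc |∫ x in s, f x ∂μ - μ.real s * ∫ x, f x ∂μ|
      = |(∫ x in s, f x ∂μ - ∫ x in t, f x ∂μ) + (∫ x in t, f x ∂μ - μ.real t * ∫ x, f x ∂μ)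
          + (μ.real t - μ.real s) * ∫ x, f x ∂μ| := by ring_nf
    _ ≤ |∫ x in s, f x ∂μ - ∫ x in t, f x ∂μ| + |∫ x in t, f x ∂μ - μ.real t * ∫ x, f x ∂μ|
          + |μ.real t - μ.real s| * |∫ x, f x ∂μ| := by
        rw [← abs_mul]; exact abs_add_three _ _ _
    _ ≤ _ := by linarith

end MeasureTheory

lemma measurable_indVec {Ω : Type*} [MeasurableSpace Ω] {N : ℕ} {B : Fin N → Set Ω}
    (hB : ∀ j, MeasurableSet (B j)) : Measurable (indVec B) :=
  measurable_pi_lambda _ fun j => measurable_to_bool <| by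
    convert hB j
    ext x
    simp [indVec]

/-- **Decorrelation transfer with boundary sets.** Suppose
`B j ⊆ B̄ j`, `B̄ j \ B j ⊆ ∂B j`, `A = ⋃ B j`, `Ā = ⋃ B̄ j`, `∂A = ⋃ ∂B j`, and
`|∫ 1_Ā (h∘U^{n'}) dμ' − μ'(Ā)∫h dμ'| ≤ C β^{n'−2k} μ'(Ā) ‖h‖_∞` for every bounded
measurable `h` and every `n' ≥ p > 2k`. Then there is `C'` depending only on `C` such
that for all `n ≥ p`, `0 ≤ l ≤ n−p` and every `[0,1]`-valued `h`,
`|∫ 1_A h(𝐁∘U^p,…,𝐁∘U^{n−l}) dμ' − μ'(A) ∫ h(𝐁∘U^p,…,𝐁∘U^{n−l}) dμ'|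
  ≤ C' ([1 + n μ'(Ā)] μ'(∂A) + β^{p−2k} μ'(Ā))`. -/
theorem stmt10 (C : ℝ) (hC : 0 < C) :
    ∃ C' : ℝ, 0 < C' ∧
    ∀ (Ω' : Type*) [MeasurableSpace Ω'] (μ' : Measure Ω') [IsProbabilityMeasure μ']
      (U : Ω' → Ω'), MeasurePreserving U μ' μ' →
    ∀ (N : ℕ), 1 ≤ N →
    ∀ (B Bbar dB : Fin N → Set Ω'),
      (∀ j, MeasurableSet (B j)) → (∀ j, MeasurableSet (Bbar j)) →
      (∀ j, MeasurableSet (dB j)) →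
      (∀ j, B j ⊆ Bbar j) → (∀ j, Bbar j \ B j ⊆ dB j) →
    ∀ (β : ℝ), 0 < β → β < 1 →
    ∀ (k p : ℕ), 1 ≤ k → 2 * k < p →
      (∀ (h : Ω' → ℝ), Measurable h → ∀ K : ℝ, (∀ x, |h x| ≤ K) →
        ∀ n' : ℕ, p ≤ n' →
        |(∫ x in ⋃ j, Bbar j, h (U^[n'] x) ∂μ')
            - (μ' (⋃ j, Bbar j)).toReal * ∫ x, h x ∂μ'|
          ≤ C * β ^ (n' - 2 * k) * (μ' (⋃ j, Bbar j)).toReal * K) →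
    ∀ (n l : ℕ), p ≤ n → l ≤ n - p →
    ∀ (h : (Fin (n - l - p + 1) → (Fin N → Bool)) → ℝ), (∀ v, h v ∈ Icc (0 : ℝ) 1) →
    |(∫ x in ⋃ j, B j, h (fun t => indVec B (U^[p + t.1] x)) ∂μ')
        - (μ' (⋃ j, B j)).toReal * ∫ x, h (fun t => indVec B (U^[p + t.1] x)) ∂μ'|
      ≤ C' * ((1 + (n : ℝ) * (μ' (⋃ j, Bbar j)).toReal) * (μ' (⋃ j, dB j)).toReal
          + β ^ (p - 2 * k) * (μ' (⋃ j, Bbar j)).toReal) := by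
  refine ⟨C + 2, by linarith, ?_⟩
  intro Ω' _ μ' _ U hU N _ B Bbar dB hB _ _ hsub hdiff β hβ _ k p _ _ hdec n _ _ _ h hh
  set g : Ω' → ℝ := fun y => h fun t => indVec B (U^[t.1] y)
  have hg : Measurable g := (measurable_of_finite h).comp <|
    measurable_pi_lambda _ fun t => (measurable_indVec hB).comp (hU.measurable.iterate t.1)
  have hg1 : ∀ y, |g y| ≤ 1 := fun y => abs_le.2 ⟨neg_one_lt_zero.le.trans (hh _).1, (hh _).2⟩
  have hshift : ∀ x, h (fun t => indVec B (U^[p + t.1] x)) = g (U^[p] x) := fun x =>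
    congrArg h <| funext fun t => by rw [add_comm, Function.iterate_add_apply]
  have hgU : Integrable (fun x => g (U^[p] x)) μ' :=
    (integrable_const 1).mono' (hg.comp (hU.measurable.iterate p)).aestronglyMeasurable
      (ae_of_all _ fun x => hg1 _)
  have hinv : ∫ x, g (U^[p] x) ∂μ' = ∫ x, g x ∂μ' := by
    rw [← integral_map (hU.iterate p).measurable.aemeasurable
      ((hU.iterate p).map_eq ▸ hg.aestronglyMeasurable), (hU.iterate p).map_eq]
  have hboundary : μ'.real ((⋃ j, Bbar j) \ ⋃ j, B j) ≤ μ'.real (⋃ j, dB j) :=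
    measureReal_mono <| (iUnion_sdiff _ _).trans_subset <|
      iUnion_mono fun j => (sdiff_subset_sdiff_right (subset_iUnion B j)).trans (hdiff j)
  simp only [hshift]
  calc _ ≤ _ := abs_setIntegral_sub_mul_integral_le_of_subset hgU (fun x => hg1 _)
          (MeasurableSet.iUnion hB) (iUnion_mono hsub)
    _ ≤ C * β ^ (p - 2 * k) * μ'.real (⋃ j, Bbar j) + 2 * 1 * μ'.real (⋃ j, dB j) := by
        gcongr
        rw [hinv]
        simpa only [mul_one, measureReal_def] using hdec g hg 1 hg1 p le_rfl
    _ ≤ _ := by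
        have hD := measureReal_nonneg (μ := μ') (s := ⋃ j, dB j)
        have hM := measureReal_nonneg (μ := μ') (s := ⋃ j, Bbar j)
        have hβM := mul_nonneg (pow_nonneg hβ.le (p - 2 * k)) hM
        simp only [← measureReal_def]
        nlinarith [mul_nonneg (mul_nonneg n.cast_nonneg hM) hD]
end

section
/- (Measure of sections and their truncations) For every measurable section A ⊆ Δ such that π_X(A) and π_X(π_{Δ_m}A) are measurable: (i) μ_Δ(A) = (∫ R dμ_X)^{-1} · μ_X(π_X(A)); (ii) μ_{Δ_m}(π_{Δ_m}A) = (∫ min(R, m+1) dμ_X)^{-1} · μ_X(π_X(A)); consequently (iii) μ_{Δ_m}(π_{Δ_m}A) = (∫ R dμ_X / ∫ min(R, m+1) dμ_X) · μ_Δ(A). -/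
open MeasureTheory Filter Set Topology
open scoped ENNReal NNReal

variable {X : Type*} [MeasurableSpace X]

/-- The Young tower `Δ := {(x,n) : n < R x}`, viewed as a subset of `X × ℕ`. -/
def towerSet (R : X → ℕ) : Set (X × ℕ) := {p | p.2 < R p.1}

/-- The tower map `F(x,n) = (x, n+1)` if `n+1 < R x`, and `F(x,n) = (g x, 0)`
otherwise. -/
def towerMap (R : X → ℕ) (g : X → X) : X × ℕ → X × ℕ :=
  fun p => if p.2 + 1 < R p.1 then (p.1, p.2 + 1) else (g p.1, 0)

/-- The tower measure `μ_Δ(E) = (∫ R dμ_X)⁻¹ Σ_{n≥0} μ_X {x : n < R x ∧ (x,n) ∈ E}`. -/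
noncomputable def towerMeasure (μX : Measure X) (R : X → ℕ) : Measure (X × ℕ) :=
  (∫⁻ x, (R x : ℝ≥0∞) ∂μX)⁻¹ •
    Measure.sum (fun n : ℕ => Measure.map (fun x => (x, n)) (μX.restrict {x | n < R x}))

/-- The truncated tower `Δ_m := {(x,n) ∈ Δ : n ≤ m}`. -/
def truncSet (R : X → ℕ) (m : ℕ) : Set (X × ℕ) := {p | p.2 < R p.1 ∧ p.2 ≤ m}

/-- The normalized measure `μ_{Δ_m} := μ_Δ(· ∩ Δ_m)/μ_Δ(Δ_m)`. -/
noncomputable def truncMeasure (μX : Measure X) (R : X → ℕ) (m : ℕ) : Measure (X × ℕ) :=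
  (towerMeasure μX R (truncSet R m))⁻¹ • (towerMeasure μX R).restrict (truncSet R m)

/-- The truncation map `π_{Δ_m}(x,n) := (x, min n m)`. -/
def truncProj (m : ℕ) : X × ℕ → X × ℕ := fun p => (p.1, min p.2 m)

/-- The first return time `R_m(z) := inf {n ≥ 1 : F^n z ∈ Δ_m}` to the truncated
tower. -/
noncomputable def returnTime (R : X → ℕ) (g : X → X) (m : ℕ) (z : X × ℕ) : ℕ :=
  sInf {n | 1 ≤ n ∧ (towerMap R g)^[n] z ∈ truncSet R m}

/-- The induced map `T_m := F^{R_m}` on the truncated tower. -/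
noncomputable def inducedMap (R : X → ℕ) (g : X → X) (m : ℕ) : X × ℕ → X × ℕ :=
  fun z => (towerMap R g)^[returnTime R g m z] z

/-! A section `A ⊆ Δ` splits into its floor slices `Aₙ = {x | (x, n) ∈ A}`; they are pairwise
disjoint because `A` is a section, and their union is `π_X(A)`, so summing over the floors in the
definition of `μ_Δ` gives (i). The truncation `π_{Δ_m}` keeps `A` a section, now inside `Δ_m`, with
the same base projection, while `μ_Δ(Δ_m) = (∫ R)⁻¹ ∫ min(R, m+1)` by the layer-cake formula
`∫ f = Σₙ μ{n < f}` for `ℕ`-valued `f`; normalising gives (ii) and (iii). -/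

lemma ENNReal.tsum_ite_lt_eq_natCast (k : ℕ) :
    ∑' n : ℕ, (if n < k then (1 : ℝ≥0∞) else 0) = k := by
  rw [tsum_eq_sum (s := Finset.range k) fun n hn => if_neg (by simpa using hn)]
  simp [Finset.filter_true_of_mem fun n hn => Finset.mem_range.1 hn]

lemma lintegral_natCast_eq_tsum_measure_lt {μ : Measure X} {f : X → ℕ} (hf : Measurable f) :
    ∫⁻ x, (f x : ℝ≥0∞) ∂μ = ∑' n : ℕ, μ {x | n < f x} := by
  have hs (n : ℕ) : MeasurableSet {x | n < f x} := measurableSet_lt measurable_const hf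
  calc ∫⁻ x, (f x : ℝ≥0∞) ∂μ = ∫⁻ x, ∑' n : ℕ, {x | n < f x}.indicator 1 x ∂μ := by
        simp only [indicator_apply, mem_ofPred_eq, Pi.one_apply, ENNReal.tsum_ite_lt_eq_natCast]
    _ = ∑' n : ℕ, ∫⁻ x, {x | n < f x}.indicator 1 x ∂μ :=
        lintegral_tsum fun n => (measurable_one.indicator (hs n)).aemeasurable
    _ = ∑' n : ℕ, μ {x | n < f x} := by simp only [lintegral_indicator_one (hs _)]

section Tower

variable (μX : Measure X) (R : X → ℕ)

lemma towerMeasure_apply {E : Set (X × ℕ)} (hE : MeasurableSet E) :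
    towerMeasure μX R E
      = (∫⁻ x, (R x : ℝ≥0∞) ∂μX)⁻¹ * ∑' n : ℕ, μX ((·, n) ⁻¹' E ∩ {x | n < R x}) := by
  rw [towerMeasure, Measure.smul_apply, smul_eq_mul, Measure.sum_apply _ hE]
  congr 1
  refine tsum_congr fun n => ?_
  have hmk : Measurable fun x : X => (x, n) := measurable_prodMk_right
  rw [Measure.map_apply hmk hE, Measure.restrict_apply (hmk hE)]

lemma towerMeasure_of_injOn_fst {A : Set (X × ℕ)} (hAsub : A ⊆ towerSet R)
    (hAmeas : MeasurableSet A) (hAsec : InjOn Prod.fst A) :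
    towerMeasure μX R A = (∫⁻ x, (R x : ℝ≥0∞) ∂μX)⁻¹ * μX (Prod.fst '' A) := by
  have hslice (n : ℕ) : MeasurableSet ((·, n) ⁻¹' A) := measurable_prodMk_right hAmeas
  have hdisj : Pairwise fun i j : ℕ => Disjoint ((·, i) ⁻¹' A) ((·, j) ⁻¹' A) :=
    fun i j hij => disjoint_left.2 fun x (hxi : (x, i) ∈ A) (hxj : (x, j) ∈ A) =>
      hij (congrArg Prod.snd (hAsec hxi hxj rfl))
  have hunion : (⋃ n : ℕ, (·, n) ⁻¹' A) = Prod.fst '' A := by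
    ext x
    simp
  rw [towerMeasure_apply μX R hAmeas, ← hunion, measure_iUnion hdisj hslice]
  congr 1
  exact tsum_congr fun n => congrArg μX (inter_eq_left.2 fun x (hx : (x, n) ∈ A) => hAsub hx)

lemma towerMeasure_truncSet (hR : Measurable R) (m : ℕ) :
    towerMeasure μX R (truncSet R m)
      = (∫⁻ x, (R x : ℝ≥0∞) ∂μX)⁻¹ * ∫⁻ x, ((min (R x) (m + 1) : ℕ) : ℝ≥0∞) ∂μX := by
  have hmeas : MeasurableSet (truncSet R m) :=
    (measurableSet_lt measurable_snd (hR.comp measurable_fst)).inter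
      (measurable_snd measurableSet_Iic)
  rw [towerMeasure_apply μX R hmeas,
    lintegral_natCast_eq_tsum_measure_lt (hR.min measurable_const)]
  congr 1
  refine tsum_congr fun n => congrArg μX ?_
  ext x
  simp only [truncSet, mem_inter_iff, mem_preimage, mem_ofPred_eq, lt_min_iff, Nat.lt_succ_iff]
  tauto

lemma truncMeasure_apply_of_subset (m : ℕ) {E : Set (X × ℕ)} (hE : MeasurableSet E)
    (hEsub : E ⊆ truncSet R m) :
    truncMeasure μX R m E = towerMeasure μX R E / towerMeasure μX R (truncSet R m) := by
  rw [truncMeasure, Measure.smul_apply, smul_eq_mul, Measure.restrict_apply hE,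
    inter_eq_left.2 hEsub, ENNReal.div_eq_inv_mul]

end Tower

omit [MeasurableSpace X] in
lemma truncProj_image_subset_truncSet {R : X → ℕ} {A : Set (X × ℕ)} (hA : A ⊆ towerSet R)
    (m : ℕ) : truncProj m '' A ⊆ truncSet R m := by
  rintro _ ⟨⟨x, n⟩, hxn, rfl⟩
  exact ⟨(min_le_left n m).trans_lt (hA hxn), min_le_right n m⟩

omit [MeasurableSpace X] in
lemma fst_image_truncProj_image (m : ℕ) (A : Set (X × ℕ)) :
    Prod.fst '' (truncProj m '' A) = Prod.fst '' A :=
  image_image ..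

omit [MeasurableSpace X] in
lemma Set.InjOn.fst_truncProj_image {A : Set (X × ℕ)} (hA : InjOn Prod.fst A) (m : ℕ) :
    InjOn Prod.fst (truncProj m '' A) :=
  InjOn.image_of_comp hA

lemma truncMeasure_truncProj_image_of_injOn_fst (μX : Measure X) {R : X → ℕ}
    (hR : Measurable R) (hI0 : ∫⁻ x, (R x : ℝ≥0∞) ∂μX ≠ 0) (hItop : ∫⁻ x, (R x : ℝ≥0∞) ∂μX ≠ ⊤)
    (m : ℕ) {A : Set (X × ℕ)} (hAsub : A ⊆ towerSet R) (hAsec : InjOn Prod.fst A)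
    (hproj : MeasurableSet (truncProj m '' A)) :
    truncMeasure μX R m (truncProj m '' A)
      = (∫⁻ x, ((min (R x) (m + 1) : ℕ) : ℝ≥0∞) ∂μX)⁻¹ * μX (Prod.fst '' A) := by
  have hsub := truncProj_image_subset_truncSet hAsub m
  rw [truncMeasure_apply_of_subset μX R m hproj hsub,
    towerMeasure_of_injOn_fst μX R (hsub.trans fun _ h => h.1) hproj
      (hAsec.fst_truncProj_image m),
    fst_image_truncProj_image, towerMeasure_truncSet μX R hR m,
    ENNReal.mul_div_mul_left _ _ (ENNReal.inv_ne_zero.2 hItop) (ENNReal.inv_ne_top.2 hI0),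
    ENNReal.div_eq_inv_mul]

theorem stmt12_general (μX : Measure X) [IsProbabilityMeasure μX]
    (R : X → ℕ) (hRmeas : Measurable R) (hR1 : ∀ x, 1 ≤ R x)
    (hRint : (∫⁻ x, (R x : ℝ≥0∞) ∂μX) < ⊤)
    (m : ℕ)
    (A : Set (X × ℕ)) (hAsub : A ⊆ towerSet R) (hAmeas : MeasurableSet A)
    (hAsec : Set.InjOn Prod.fst A)
    (hproj : MeasurableSet (truncProj m '' A)) :
    towerMeasure μX R A = (∫⁻ x, (R x : ℝ≥0∞) ∂μX)⁻¹ * μX (Prod.fst '' A)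
    ∧ truncMeasure μX R m (truncProj m '' A)
        = (∫⁻ x, ((min (R x) (m + 1) : ℕ) : ℝ≥0∞) ∂μX)⁻¹ * μX (Prod.fst '' A)
    ∧ truncMeasure μX R m (truncProj m '' A)
        = ((∫⁻ x, (R x : ℝ≥0∞) ∂μX) / (∫⁻ x, ((min (R x) (m + 1) : ℕ) : ℝ≥0∞) ∂μX))
          * towerMeasure μX R A := by
  have hI0 : ∫⁻ x, (R x : ℝ≥0∞) ∂μX ≠ 0 := by
    have h1 : ∫⁻ _, (1 : ℝ≥0∞) ∂μX ≤ ∫⁻ x, (R x : ℝ≥0∞) ∂μX :=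
      lintegral_mono fun x => Nat.one_le_cast.2 (hR1 x)
    rw [lintegral_const, measure_univ, one_mul] at h1
    exact (zero_lt_one.trans_le h1).ne'
  have hsection := towerMeasure_of_injOn_fst μX R hAsub hAmeas hAsec
  have htrunc :=
    truncMeasure_truncProj_image_of_injOn_fst μX hRmeas hI0 hRint.ne m hAsub hAsec hproj
  refine ⟨hsection, htrunc, ?_⟩
  rw [htrunc, hsection, ENNReal.div_eq_inv_mul, mul_assoc, ← mul_assoc _ _⁻¹,
    ENNReal.mul_inv_cancel hI0 hRint.ne, one_mul]

/-- **Measure of sections and their truncations.** For every measurable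
section `A ⊆ Δ` (with `π_X(A)` and `π_{Δ_m}(A)` measurable):
(i) `μ_Δ(A) = (∫ R dμ_X)⁻¹ · μ_X(π_X(A))`;
(ii) `μ_{Δ_m}(π_{Δ_m}A) = (∫ min(R, m+1) dμ_X)⁻¹ · μ_X(π_X(A))`;
(iii) `μ_{Δ_m}(π_{Δ_m}A) = (∫ R dμ_X / ∫ min(R, m+1) dμ_X) · μ_Δ(A)`. -/
theorem stmt12 (μX : Measure X) [IsProbabilityMeasure μX]
    (R : X → ℕ) (hRmeas : Measurable R) (hR1 : ∀ x, 1 ≤ R x)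
    (hRint : (∫⁻ x, (R x : ℝ≥0∞) ∂μX) < ⊤)
    (g : X → X) (hg : MeasurePreserving g μX μX)
    (m : ℕ)
    (A : Set (X × ℕ)) (hAsub : A ⊆ towerSet R) (hAmeas : MeasurableSet A)
    (hAsec : Set.InjOn Prod.fst A)
    (hfst : MeasurableSet (Prod.fst '' A))
    (hproj : MeasurableSet (truncProj m '' A)) :
    towerMeasure μX R A = (∫⁻ x, (R x : ℝ≥0∞) ∂μX)⁻¹ * μX (Prod.fst '' A)
    ∧ truncMeasure μX R m (truncProj m '' A)
        = (∫⁻ x, ((min (R x) (m + 1) : ℕ) : ℝ≥0∞) ∂μX)⁻¹ * μX (Prod.fst '' A)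
    ∧ truncMeasure μX R m (truncProj m '' A)
        = ((∫⁻ x, (R x : ℝ≥0∞) ∂μX) / (∫⁻ x, ((min (R x) (m + 1) : ℕ) : ℝ≥0∞) ∂μX))
          * towerMeasure μX R A :=
  stmt12_general μX R hRmeas hR1 hRint m A hAsub hAmeas hAsec hproj
end
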